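/- Fix i ∈ {1,…,n} with λ̃_i > 0 and fix k ∈ {1,…,n}, k ≠ i; define f_i(w) = 1/N(w) + λ_k(w̄_1,…,w̄_{i−1}, w_i, w̄_{i+1},…,w̄_n)/(λ̃_i − λ̃_k), and define ψ_i(x) = x + ∫_{Z^0(x)}^{+∞} (1/N(w̃^0(ξ)) − 1/N(w̄)) dξ + (1/(λ̃_i − λ̃_k)) ∫_{Z^0(x)}^{+∞} (λ_k(w̄_1,…,w̄_{i−1}, w̃^0_i(ξ), w̄_{i+1},…,w̄_n) − λ̄_k) dξ. Then ψ_i is a Lipschitz function on ℝ with ψ_i'(x) = 1 − N(w^0(x))·(f_i(w^0(x)) − f_i(w̄)) for a.e. x ∈ ℝ; consequently there exist constants δ_1 > 0 and C_{δ1} > 0, depending only on n, c, C, the C^1 norms of N and of the λ_j on the convex hull of K, the constants λ̃_j and w̄, such that if ‖w^0 − w̄‖_{L^∞(ℝ)} < δ_1 then ψ_i'(x) ≥ C_{δ1} for a.e. x ∈ ℝ. -/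

import Mathlib

/-!
Put `g = f ∘ w⁰ - f w̄`. Both `1 / N v - 1 / N w̄` and `λ_k (w̄ with v_i in slot i) - λ̄_k` are
differentiable at `w̄` and vanish there, so on the compact set `K` they are bounded by a multiple
of `‖v - w̄‖`; hence `|g| ≤ L ‖w⁰ - w̄‖`, and `g` is bounded and integrable. The map `Z⁰` pushes
the measure `N (w⁰ x) dx` forward to Lebesgue measure, and `c ≤ N ≤ C`, so `g ∘ X⁰` is
integrable and preimages of null sets under `Z⁰` are null. Writing
`ψ x = x + ∫_{Z⁰ x}^∞ g (X⁰ ξ) dξ`, the Lebesgue differentiation theorem and the chain rule give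
`ψ' = 1 - (N ∘ w⁰) g` almost everywhere, which is at least `1 - C L ‖w⁰ - w̄‖_∞ ≥ 1 / 2` when
`‖w⁰ - w̄‖_∞ < 1 / (2 C L)`.
-/

open MeasureTheory Set

theorem DifferentiableAt.exists_norm_le_mul_norm_sub {E F : Type*} [NormedAddCommGroup E]
    [NormedSpace ℝ E] [NormedAddCommGroup F] [NormedSpace ℝ F] {h : E → F} {K : Set E} {a : E}
    (hd : DifferentiableAt ℝ h a) (ha : h a = 0) (hK : IsCompact K) (hcont : ContinuousOn h K) :
    ∃ L > 0, ∀ v ∈ K, ‖h v‖ ≤ L * ‖v - a‖ := by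
  obtain ⟨L₁, hL₁⟩ := hd.hasFDerivAt.isBigO_sub.bound
  obtain ⟨r, hr, hnear⟩ := Metric.eventually_nhds_iff.1 hL₁
  obtain ⟨B, hB⟩ := hK.exists_bound_of_continuousOn hcont
  refine ⟨max (max L₁ (B / r)) 1, by positivity, fun v hv => ?_⟩
  rcases lt_or_ge ‖v - a‖ r with hvr | hvr
  · calc ‖h v‖ = ‖h v - h a‖ := by rw [ha, sub_zero]
      _ ≤ L₁ * ‖v - a‖ := hnear (by rwa [dist_eq_norm])
      _ ≤ _ := by gcongr; exact (le_max_left _ _).trans (le_max_left _ _)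
  · have hB0 : 0 ≤ B := (norm_nonneg _).trans (hB v hv)
    calc ‖h v‖ ≤ B / r * r := by rw [div_mul_cancel₀ _ hr.ne']; exact hB v hv
      _ ≤ B / r * ‖v - a‖ := by gcongr
      _ ≤ _ := by gcongr; exact (le_max_right _ _).trans (le_max_left _ _)

theorem exists_norm_one_div_sub_le_mul_norm_sub {E : Type*} [NormedAddCommGroup E]
    [NormedSpace ℝ E] {N : E → ℝ} {K : Set E} {a : E} (hN : Differentiable ℝ N)
    (hK : IsCompact K) (hpos : ∀ v ∈ K, 0 < N v) (ha : a ∈ K) :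
    ∃ L > 0, ∀ v ∈ K, ‖1 / N v - 1 / N a‖ ≤ L * ‖v - a‖ :=
  DifferentiableAt.exists_norm_le_mul_norm_sub (h := fun v => 1 / N v - 1 / N a) (a := a)
    (by fun_prop (disch := exact (hpos a ha).ne')) (sub_self _) hK
    ((continuousOn_const.div hN.continuous.continuousOn fun v hv => (hpos v hv).ne').sub
      continuousOn_const)

theorem exists_norm_comp_update_sub_le_mul_norm_sub {ι : Type*} [Fintype ι] [DecidableEq ι]
    {g : (ι → ℝ) → ℝ} {K : Set (ι → ℝ)} (hg : Differentiable ℝ g) (hK : IsCompact K)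
    (a : ι → ℝ) (i : ι) :
    ∃ L > 0, ∀ v ∈ K, ‖g (Function.update a i (v i)) - g a‖ ≤ L * ‖v - a‖ := by
  have hupd : Differentiable ℝ (Function.update a i) := fun y =>
    (hasFDerivAt_update a y).differentiableAt
  have hgc := hg.continuous
  exact DifferentiableAt.exists_norm_le_mul_norm_sub
    (h := fun v => g (Function.update a i (v i)) - g a) (a := a)
    (by fun_prop) (by simp) hK (by fun_prop : Continuous _).continuousOn

theorem ae_norm_lt_of_eLpNorm_top_lt {α E : Type*} [MeasurableSpace α] {μ : Measure α}
    [NormedAddCommGroup E] {u : α → E} {δ : ℝ} (h : eLpNorm u ⊤ μ < ENNReal.ofReal δ) :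
    ∀ᵐ x ∂μ, ‖u x‖ < δ := by
  rw [eLpNorm_exponent_top] at h
  filter_upwards [ae_le_eLpNormEssSup (f := u)] with x hx
  rw [← ofReal_norm] at hx
  exact (ENNReal.ofReal_lt_ofReal_iff'.1 (hx.trans_lt h)).1

theorem integrable_comp_of_norm_le_mul_norm_sub {α E : Type*} [MeasurableSpace α]
    {μ : Measure α} [NormedAddCommGroup E] {w : α → E} {h : E → ℝ} {K : Set E} {a : E} {L : ℝ}
    (hw : Integrable (fun x => w x - a) μ) (hwK : ∀ x, w x ∈ K)
    (hm : AEStronglyMeasurable (fun x => h (w x)) μ) (hh : ∀ v ∈ K, ‖h v‖ ≤ L * ‖v - a‖) :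
    Integrable (fun x => h (w x)) μ :=
  (hw.norm.const_mul L).mono' hm (ae_of_all _ fun x => hh _ (hwK x))

section Primitive

variable {q : ℝ → ℝ}

theorem MeasureTheory.LocallyIntegrable.intervalIntegrable (hq : LocallyIntegrable q) (a b : ℝ) :
    IntervalIntegrable q volume a b :=
  (hq.integrableOn_isCompact isCompact_uIcc).intervalIntegrable

theorem MeasureTheory.LocallyIntegrable.continuous_primitive (hq : LocallyIntegrable q) (a : ℝ) :
    Continuous fun x => ∫ t in a..x, q t :=
  intervalIntegral.continuous_primitive hq.intervalIntegrable a

theorem lipschitzWith_primitive {B : NNReal} (hq : LocallyIntegrable q) (hB : ∀ x, ‖q x‖ ≤ B)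
    (a : ℝ) : LipschitzWith B fun x => ∫ t in a..x, q t := by
  refine LipschitzWith.of_dist_le_mul fun x y => ?_
  rw [dist_eq_norm, intervalIntegral.integral_interval_sub_left (hq.intervalIntegrable a x)
    (hq.intervalIntegrable a y), Real.dist_eq]
  exact intervalIntegral.norm_integral_le_of_norm_le_const fun t _ => hB t

theorem strictMono_primitive (hq : LocallyIntegrable q) (hpos : ∀ x, 0 < q x) (a : ℝ) :
    StrictMono fun x => ∫ t in a..x, q t := by
  intro x y hxy
  rw [← sub_pos, intervalIntegral.integral_interval_sub_left (hq.intervalIntegrable a y)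
    (hq.intervalIntegrable a x)]
  exact intervalIntegral.intervalIntegral_pos_of_pos_on (hq.intervalIntegrable x y)
    (fun t _ => hpos t) hxy

theorem integral_Ioi_eq_sub_primitive (hq : Integrable q) (z : ℝ) :
    ∫ ξ in Ioi z, q ξ = (∫ ξ in Ioi 0, q ξ) - ∫ ξ in 0..z, q ξ := by
  rw [← intervalIntegral.integral_Ioi_sub_Ioi' hq.integrableOn hq.integrableOn, sub_sub_cancel]

theorem lipschitzWith_integral_Ioi {B : NNReal} (hq : Integrable q) (hB : ∀ x, ‖q x‖ ≤ B) :
    LipschitzWith B fun z => ∫ ξ in Ioi z, q ξ := by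
  rw [funext (integral_Ioi_eq_sub_primitive hq)]
  simpa using (LipschitzWith.const (∫ ξ in Ioi 0, q ξ)).sub
    (lipschitzWith_primitive hq.locallyIntegrable hB 0)

theorem ae_hasDerivAt_integral_Ioi (hq : Integrable q) :
    ∀ᵐ z, HasDerivAt (fun z => ∫ ξ in Ioi z, q ξ) (-q z) z := by
  filter_upwards [LocallyIntegrable.ae_hasDerivAt_integral hq.locallyIntegrable] with z hz
  rw [funext (integral_Ioi_eq_sub_primitive hq)]
  simpa using (hz 0).const_sub (∫ ξ in Ioi 0, q ξ)

end Primitive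

section Reparametrization

variable {ρ Z X : ℝ → ℝ}

theorem map_withDensity_primitive_eq_volume (hρ : LocallyIntegrable ρ) (hpos : ∀ x, 0 < ρ x)
    (hZ : ∀ x, Z x = ∫ t in (0:ℝ)..x, ρ t) (hZX : ∀ z, Z (X z) = z) :
    (volume.withDensity fun x => ENNReal.ofReal (ρ x)).map Z = volume := by
  have hZfun : Z = fun x => ∫ t in (0:ℝ)..x, ρ t := funext hZ
  have hmono : StrictMono Z := hZfun ▸ strictMono_primitive hρ hpos 0
  have hmeas : Measurable Z := hZfun ▸ (hρ.continuous_primitive 0).measurable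
  refine (Measure.ext_of_Ioc _ _ fun a b hab => ?_).symm
  have hlt : ∀ z y, z < Z y ↔ X z < y := fun z y => by
    simpa only [hZX] using hmono.lt_iff_lt (a := X z) (b := y)
  have hle : ∀ z y, Z y ≤ z ↔ y ≤ X z := fun z y => by
    simpa only [hZX] using hmono.le_iff_le (a := y) (b := X z)
  have hpre : Z ⁻¹' Ioc a b = Ioc (X a) (X b) := by
    ext y
    simp only [mem_preimage, mem_Ioc, hlt, hle]
  have hXab : X a ≤ X b := by rw [← hle, hZX]; exact hab.le
  rw [Measure.map_apply hmeas measurableSet_Ioc, hpre, withDensity_apply _ measurableSet_Ioc,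
    ← ofReal_integral_eq_lintegral_ofReal (hρ.integrableOn_isCompact isCompact_Icc |>.mono_set
      Ioc_subset_Icc_self) (ae_of_all _ fun x => (hpos x).le),
    ← intervalIntegral.integral_of_le hXab, ← intervalIntegral.integral_interval_sub_left
      (hρ.intervalIntegrable 0 _) (hρ.intervalIntegrable 0 _), ← hZ, ← hZ, hZX, hZX,
    Real.volume_Ioc]

theorem quasiMeasurePreserving_primitive (hρ : LocallyIntegrable ρ) (hpos : ∀ x, 0 < ρ x)
    (hZ : ∀ x, Z x = ∫ t in (0:ℝ)..x, ρ t) (hZX : ∀ z, Z (X z) = z) :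
    Measure.QuasiMeasurePreserving Z volume volume := by
  have hmeas : Measurable Z := funext hZ ▸ (hρ.continuous_primitive 0).measurable
  refine ⟨hmeas, ?_⟩
  have hac := (withDensity_absolutelyContinuous' (μ := volume)
    hρ.aestronglyMeasurable.aemeasurable.ennreal_ofReal
    (ae_of_all _ fun x => (ENNReal.ofReal_pos.2 (hpos x)).ne')).map hmeas
  rwa [map_withDensity_primitive_eq_volume hρ hpos hZ hZX] at hac

theorem integrable_comp_of_primitive_inverse {C : ℝ} {g : ℝ → ℝ} (hρ : LocallyIntegrable ρ)
    (hpos : ∀ x, 0 < ρ x) (hρC : ∀ x, ρ x ≤ C) (hZ : ∀ x, Z x = ∫ t in (0:ℝ)..x, ρ t)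
    (hXZ : ∀ x, X (Z x) = x) (hZX : ∀ z, Z (X z) = z) (hgm : Measurable g) (hg : Integrable g) :
    Integrable (g ∘ X) := by
  have hmono : StrictMono Z := funext hZ ▸ strictMono_primitive hρ hpos 0
  have hXm : Measurable X := Monotone.measurable fun a b hab => by
    rwa [← hmono.le_iff_le, hZX, hZX]
  have hdens : volume.withDensity (fun x => ENNReal.ofReal (ρ x)) ≤ ENNReal.ofReal C • volume :=
    calc volume.withDensity (fun x => ENNReal.ofReal (ρ x))
        ≤ volume.withDensity (fun _ => ENNReal.ofReal C) :=
          withDensity_mono (ae_of_all _ fun x => ENNReal.ofReal_le_ofReal (hρC x))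
      _ = ENNReal.ofReal C • volume := withDensity_const _
  have hZm : Measurable Z := funext hZ ▸ (hρ.continuous_primitive 0).measurable
  have hgX : AEStronglyMeasurable (g ∘ X) volume := (hgm.comp hXm).aestronglyMeasurable
  have hXZ' : g ∘ X ∘ Z = g := funext fun x => by simp [hXZ]
  rw [← map_withDensity_primitive_eq_volume hρ hpos hZ hZX] at hgX ⊢
  rw [integrable_map_measure hgX hZm.aemeasurable, Function.comp_assoc, hXZ']
  exact (hg.smul_measure ENNReal.ofReal_ne_top).mono_measure hdens

theorem lipschitzWith_add_integral_Ioi_comp {C : ℝ} {B : NNReal} {g : ℝ → ℝ}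
    (hρ : LocallyIntegrable ρ) (hpos : ∀ x, 0 < ρ x) (hρC : ∀ x, ρ x ≤ C)
    (hZ : ∀ x, Z x = ∫ t in (0:ℝ)..x, ρ t) (hXZ : ∀ x, X (Z x) = x) (hZX : ∀ z, Z (X z) = z)
    (hgm : Measurable g) (hg : Integrable g) (hgB : ∀ y, ‖g y‖ ≤ B) :
    LipschitzWith (1 + B * C.toNNReal) fun x => x + ∫ ξ in Ioi (Z x), g (X ξ) := by
  have hρC' : ∀ x, ‖ρ x‖ ≤ C.toNNReal := fun x => by
    rw [Real.norm_of_nonneg (hpos x).le]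
    exact (hρC x).trans (Real.le_coe_toNNReal C)
  have hZlip : LipschitzWith C.toNNReal Z := funext hZ ▸ lipschitzWith_primitive hρ hρC' 0
  have hgX := integrable_comp_of_primitive_inverse hρ hpos hρC hZ hXZ hZX hgm hg
  exact LipschitzWith.id.add ((lipschitzWith_integral_Ioi hgX fun ξ => hgB (X ξ)).comp hZlip)

theorem ae_hasDerivAt_add_integral_Ioi_comp {C : ℝ} {g : ℝ → ℝ}
    (hρ : LocallyIntegrable ρ) (hpos : ∀ x, 0 < ρ x) (hρC : ∀ x, ρ x ≤ C)
    (hZ : ∀ x, Z x = ∫ t in (0:ℝ)..x, ρ t) (hXZ : ∀ x, X (Z x) = x) (hZX : ∀ z, Z (X z) = z)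
    (hgm : Measurable g) (hg : Integrable g) :
    ∀ᵐ x, HasDerivAt (fun x => x + ∫ ξ in Ioi (Z x), g (X ξ)) (1 - ρ x * g x) x := by
  have hgX := integrable_comp_of_primitive_inverse hρ hpos hρC hZ hXZ hZX hgm hg
  filter_upwards [(quasiMeasurePreserving_primitive hρ hpos hZ hZX).ae
    (ae_hasDerivAt_integral_Ioi hgX), LocallyIntegrable.ae_hasDerivAt_integral hρ] with x hT hZx
  have hZd : HasDerivAt Z (ρ x) x := funext hZ ▸ hZx 0
  rw [Function.comp_apply, hXZ] at hT
  exact ((hasDerivAt_id' x).add (hT.comp x hZd)).congr_deriv (by ring)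

theorem lipschitzWith_and_ae_hasDerivAt_add_integral_Ioi_comp {C B b : ℝ} {q₁ q₂ : ℝ → ℝ}
    (hρ : LocallyIntegrable ρ) (hpos : ∀ x, 0 < ρ x) (hρC : ∀ x, ρ x ≤ C)
    (hZ : ∀ x, Z x = ∫ t in (0:ℝ)..x, ρ t) (hXZ : ∀ x, X (Z x) = x) (hZX : ∀ z, Z (X z) = z)
    (hm₁ : Measurable q₁) (hi₁ : Integrable q₁) (hm₂ : Measurable q₂) (hi₂ : Integrable q₂)
    (hB : ∀ y, ‖q₁ y + b * q₂ y‖ ≤ B) :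
    (∃ L : NNReal, LipschitzWith L fun x =>
      x + (∫ ξ in Ioi (Z x), q₁ (X ξ)) + b * ∫ ξ in Ioi (Z x), q₂ (X ξ)) ∧
    ∀ᵐ x, HasDerivAt (fun x => x + (∫ ξ in Ioi (Z x), q₁ (X ξ)) + b * ∫ ξ in Ioi (Z x), q₂ (X ξ))
      (1 - ρ x * (q₁ x + b * q₂ x)) x := by
  have hsum : (fun x => x + (∫ ξ in Ioi (Z x), q₁ (X ξ)) + b * ∫ ξ in Ioi (Z x), q₂ (X ξ)) =
      fun x => x + ∫ ξ in Ioi (Z x), (q₁ (X ξ) + b * q₂ (X ξ)) := by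
    funext x
    rw [add_assoc, ← integral_const_mul, ← integral_add]
    · exact (integrable_comp_of_primitive_inverse hρ hpos hρC hZ hXZ hZX hm₁ hi₁).integrableOn
    · exact (integrable_comp_of_primitive_inverse hρ hpos hρC hZ hXZ hZX hm₂
        hi₂).integrableOn.const_mul b
  have hm : Measurable fun y => q₁ y + b * q₂ y := hm₁.add (hm₂.const_mul b)
  have hi : Integrable fun y => q₁ y + b * q₂ y := hi₁.add (hi₂.const_mul b)
  rw [hsum]
  exact ⟨⟨_, lipschitzWith_add_integral_Ioi_comp hρ hpos hρC hZ hXZ hZX hm hi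
    fun y => (hB y).trans (Real.le_coe_toNNReal B)⟩,
    ae_hasDerivAt_add_integral_Ioi_comp hρ hpos hρC hZ hXZ hZX hm hi⟩

end Reparametrization

theorem one_half_le_one_sub_mul {ρ d r C L : ℝ} (hC : 0 < C) (hL : 0 < L) (hρ : 0 ≤ ρ)
    (hρC : ρ ≤ C) (hd : ‖d‖ ≤ L * r) (hr : r < 1 / (2 * C * L)) : 1 / 2 ≤ 1 - ρ * d := by
  have hsmall : ρ * d ≤ 1 / 2 :=
    calc ρ * d ≤ ρ * |d| := mul_le_mul_of_nonneg_left (le_abs_self d) hρ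
      _ ≤ C * (L * (1 / (2 * C * L))) := by
          rw [← Real.norm_eq_abs]
          exact mul_le_mul hρC (hd.trans (by gcongr)) (norm_nonneg d) hC.le
      _ = 1 / 2 := by field_simp
  linarith

theorem stmt_5
    (n : ℕ)
    (K : Set (Fin n → ℝ)) (hK : IsCompact K)
    (lam : Fin n → (Fin n → ℝ) → ℝ) (hlam : ∀ i, ContDiff ℝ 1 (lam i))
    (N : (Fin n → ℝ) → ℝ) (hN : ContDiff ℝ 1 N)
    (c C : ℝ) (hc : 0 < c) (hcC : c ≤ C)
    (hNbd : ∀ w ∈ convexHull ℝ K, c ≤ N w ∧ N w ≤ C)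
    (tlam : Fin n → ℝ)
    (wbar : Fin n → ℝ) (hwbarK : wbar ∈ K)
    (i k : Fin n)
    (f : (Fin n → ℝ) → ℝ)
    (hf : ∀ v : Fin n → ℝ,
      f v = 1 / N v + lam k (Function.update wbar i (v i)) / (tlam i - tlam k)) :
    ∃ δ1 > (0:ℝ), ∃ Cδ1 > (0:ℝ),
      ∀ (w0 : ℝ → Fin n → ℝ) (Z0 X0 : ℝ → ℝ) (ψ : ℝ → ℝ),
        Measurable w0 → (∀ x, w0 x ∈ K) →
        Integrable (fun x => w0 x - wbar) →
        (∀ x, Z0 x = ∫ ξ in (0:ℝ)..x, N (w0 ξ)) →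
        (∀ x, X0 (Z0 x) = x) → (∀ z, Z0 (X0 z) = z) →
        (∀ x, ψ x = x
          + (∫ ξ in Ioi (Z0 x), (1 / N (w0 (X0 ξ)) - 1 / N wbar))
          + (tlam i - tlam k)⁻¹ *
              ∫ ξ in Ioi (Z0 x), (lam k (Function.update wbar i (w0 (X0 ξ) i)) - lam k wbar)) →
        (∃ L : NNReal, LipschitzWith L ψ) ∧
        (∀ᵐ x : ℝ, HasDerivAt ψ (1 - N (w0 x) * (f (w0 x) - f wbar)) x) ∧
        (eLpNorm (fun x => w0 x - wbar) ⊤ volume < ENNReal.ofReal δ1 →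
          ∀ᵐ x : ℝ, ∃ d, HasDerivAt ψ d x ∧ Cδ1 ≤ d) := by
  have hNpos : ∀ v ∈ K, 0 < N v := fun v hv => hc.trans_le (hNbd v (subset_convexHull ℝ K hv)).1
  have hNC : ∀ v ∈ K, N v ≤ C := fun v hv => (hNbd v (subset_convexHull ℝ K hv)).2
  have hN' := hN.differentiable one_ne_zero
  obtain ⟨L₁, hL₁, h₁le⟩ := exists_norm_one_div_sub_le_mul_norm_sub hN' hK hNpos hwbarK
  obtain ⟨L₂, hL₂, h₂le⟩ :=
    exists_norm_comp_update_sub_le_mul_norm_sub ((hlam k).differentiable one_ne_zero) hK wbar i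
  set a := (tlam i - tlam k)⁻¹
  set L := L₁ + |a| * L₂
  have hf_split : ∀ v, f v - f wbar = (1 / N v - 1 / N wbar)
      + a * (lam k (Function.update wbar i (v i)) - lam k wbar) := fun v => by
    simp only [hf, Function.update_eq_self, a]
    ring
  have hf_le : ∀ v ∈ K, ‖f v - f wbar‖ ≤ L * ‖v - wbar‖ := fun v hv => by
    rw [hf_split]
    refine (norm_add_le _ _).trans ?_
    rw [norm_mul, Real.norm_eq_abs a, add_mul, mul_assoc]
    gcongr
    exacts [h₁le v hv, h₂le v hv]
  obtain ⟨R, hR⟩ := hK.isBounded.subset_closedBall wbar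
  have hL : 0 < L := by positivity
  have hC : 0 < C := hc.trans_le hcC
  refine ⟨1 / (2 * C * L), by positivity, 1 / 2, by norm_num, ?_⟩
  intro w0 Z0 X0 ψ hw0m hw0K hw0L1 hZ0 hXZ hZX hψ
  obtain rfl := funext hψ
  have hρpos : ∀ x, 0 < N (w0 x) := fun x => hNpos _ (hw0K x)
  have hρC : ∀ x, N (w0 x) ≤ C := fun x => hNC _ (hw0K x)
  have hρ : LocallyIntegrable fun x => N (w0 x) :=
    (locallyIntegrable_const C).mono (hN'.continuous.measurable.comp hw0m).aestronglyMeasurable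
      (ae_of_all _ fun x => by simpa [abs_of_pos (hρpos x), abs_of_pos hC] using hρC x)
  have hm₁ : Measurable fun y => 1 / N (w0 y) - 1 / N wbar := by
    have := hN'.continuous.measurable
    fun_prop
  have hm₂ : Measurable fun y => lam k (Function.update wbar i (w0 y i)) - lam k wbar := by
    have := (hlam k).continuous.measurable
    fun_prop
  obtain ⟨hlip, hder⟩ := lipschitzWith_and_ae_hasDerivAt_add_integral_Ioi_comp (B := L * R)
    hρ hρpos hρC hZ0 hXZ hZX
    hm₁ (integrable_comp_of_norm_le_mul_norm_sub hw0L1 hw0K hm₁.aestronglyMeasurable h₁le)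
    hm₂ (integrable_comp_of_norm_le_mul_norm_sub hw0L1 hw0K hm₂.aestronglyMeasurable h₂le)
    fun y => by
      rw [← hf_split]
      exact (hf_le _ (hw0K y)).trans (by gcongr; exact mem_closedBall_iff_norm.1 (hR (hw0K y)))
  simp only [← hf_split] at hder
  refine ⟨hlip, hder, fun hδ => ?_⟩
  filter_upwards [hder, ae_norm_lt_of_eLpNorm_top_lt hδ] with x hx hxδ
  exact ⟨_, hx, one_half_le_one_sub_mul hC hL (hρpos x).le (hρC x) (hf_le _ (hw0K x)) hxδ⟩
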